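/- The staggered corner-EMF update of the magnetic field preserves the discrete divergence exactly. Let Δx, Δy, Δt be nonzero reals, and let Bx, By, E : ℤ × ℤ → ℝ be arbitrary grid functions, where Bx(i,j) represents the x-component at face (i+½, j), By(i,j) the y-component at face (i, j+½), and E(i,j) the electric field at corner (i+½, j+½). Define the updated fields Bx'(i,j) = Bx(i,j) − (Δt/Δy)(E(i,j) − E(i,j−1)) and By'(i,j) = By(i,j) + (Δt/Δx)(E(i,j) − E(i−1,j)). Then for every (i,j) ∈ ℤ × ℤ, (Bx'(i,j) − Bx'(i−1,j))/Δx + (By'(i,j) − By'(i,j−1))/Δy = (Bx(i,j) − Bx(i−1,j))/Δx + (By(i,j) − By(i,j−1))/Δy. In particular, if the discrete divergence vanishes for (Bx, By), it vanishes for (Bx', By'). -/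
import Mathlib


/-- The staggered corner-EMF update of the magnetic field preserves the
discrete divergence exactly: with
`Bx'(i,j) = Bx(i,j) − (Δt/Δy)(E(i,j) − E(i,j−1))` and
`By'(i,j) = By(i,j) + (Δt/Δx)(E(i,j) − E(i−1,j))`,
the discrete divergence of `(Bx', By')` in every cell equals that of `(Bx, By)`;
in particular, if it vanishes initially, it vanishes after the update. -/
theorem staggered_update_divergence_free
    (Δx Δy Δt : ℝ) (hΔx : Δx ≠ 0) (hΔy : Δy ≠ 0) (hΔt : Δt ≠ 0)
    (Bx By E : ℤ × ℤ → ℝ) :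
    let Bx' : ℤ × ℤ → ℝ := fun ij =>
      Bx ij - (Δt / Δy) * (E ij - E (ij.1, ij.2 - 1))
    let By' : ℤ × ℤ → ℝ := fun ij =>
      By ij + (Δt / Δx) * (E ij - E (ij.1 - 1, ij.2))
    (∀ i j : ℤ,
      (Bx' (i, j) - Bx' (i - 1, j)) / Δx + (By' (i, j) - By' (i, j - 1)) / Δy =
      (Bx (i, j) - Bx (i - 1, j)) / Δx + (By (i, j) - By (i, j - 1)) / Δy) ∧
    ((∀ i j : ℤ,
        (Bx (i, j) - Bx (i - 1, j)) / Δx + (By (i, j) - By (i, j - 1)) / Δy = 0) →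
      ∀ i j : ℤ,
        (Bx' (i, j) - Bx' (i - 1, j)) / Δx + (By' (i, j) - By' (i, j - 1)) / Δy = 0) := by
  intro Bx' By'
  have key : ∀ i j : ℤ,
      (Bx' (i, j) - Bx' (i - 1, j)) / Δx + (By' (i, j) - By' (i, j - 1)) / Δy =
      (Bx (i, j) - Bx (i - 1, j)) / Δx + (By (i, j) - By (i, j - 1)) / Δy := by
    intro i j
    simp only [Bx', By']
    field_simp
    ring
  exact ⟨key, fun h i j => (key i j).trans (h i j)⟩
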